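/- arXiv:2105.02074 — 2 statements merged into one kernel-verified Lean document; each statement's English description precedes it below -/
import Mathlib

section
/- Let A and B be nonzero positive semidefinite d×d complex matrices. Then tr(√A √B) ≥ tr(AB) / √(tr(A) · tr(B)), where all the traces appearing are nonnegative real numbers. Equality holds if and only if tr(AB) = 0, or both A and B have matrix rank one. -/
/-!
Diagonalise `A = U diag(μ) U*` and `B = V diag(ν) V*` and put `t i j = |(U* V) i j|²`. Then
`tr(√A √B) = ∑ √(μ i ν j) t i j`, `tr(AB) = ∑ μ i ν j t i j`, `tr A = ∑ μ` and `tr B = ∑ ν`.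
As `μ i ν j ≤ tr A · tr B`, each term of `tr(AB)` is at most `√(tr A · tr B)` times the
corresponding term of `tr(√A √B)`. Equality forces every term with `√(μ i ν j) t i j ≠ 0` to have
`μ i = tr A` and `ν j = tr B`, i.e. to come from the only nonzero eigenvalues of `A` and `B`.
-/

open Matrix BigOperators
open scoped ComplexOrder

/-- `Matrix.PosSemidef.sqrt` was removed from Mathlib; restored with its old definition. -/
noncomputable def Matrix.PosSemidef.sqrt {n 𝕜 : Type*} [Fintype n] [RCLike 𝕜] [DecidableEq n]
    {A : Matrix n n 𝕜} (hA : A.PosSemidef) : Matrix n n 𝕜 :=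
  hA.1.eigenvectorUnitary.1 * diagonal ((↑) ∘ (√·) ∘ hA.1.eigenvalues) *
    (star hA.1.eigenvectorUnitary : Matrix n n 𝕜)

open Finset

section WeightedSums

variable {ι κ : Type*} [Fintype ι] [Fintype κ] {μ : ι → ℝ} {ν : κ → ℝ}

lemma eq_sum_iff_card_ne_zero_eq_one (hμ : 0 ≤ μ) {i : ι} (hi : μ i ≠ 0) :
    μ i = ∑ k, μ k ↔ Fintype.card {k // μ k ≠ 0} = 1 := by
  classical
  rw [← add_sum_erase _ _ (mem_univ i), left_eq_add, sum_eq_zero_iff_of_nonneg fun k _ ↦ hμ k,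
    Fintype.card_eq_one_iff]
  constructor
  · refine fun h ↦ ⟨⟨i, hi⟩, fun ⟨k, hk⟩ ↦ Subtype.ext ?_⟩
    by_contra hki
    exact hk (h k (mem_erase.2 ⟨hki, mem_univ k⟩))
  · rintro ⟨k₀, h⟩ k hk
    by_contra hk0
    exact (mem_erase.1 hk).1 (congrArg Subtype.val ((h ⟨k, hk0⟩).trans (h ⟨i, hi⟩).symm))

lemma sqrt_mul_sqrt_le_sqrt_sum_mul_sum (hμ : 0 ≤ μ) (hν : 0 ≤ ν) (i : ι) (j : κ) :
    √(μ i) * √(ν j) ≤ √((∑ k, μ k) * ∑ k, ν k) := by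
  rw [← Real.sqrt_mul (hμ i)]
  exact Real.sqrt_le_sqrt <| mul_le_mul (single_le_sum (fun k _ ↦ hμ k) (mem_univ i))
    (single_le_sum (fun k _ ↦ hν k) (mem_univ j)) (hν j) (sum_nonneg fun k _ ↦ hμ k)

lemma sqrt_mul_sqrt_eq_sqrt_sum_mul_sum_iff (hμ : 0 ≤ μ) (hν : 0 ≤ ν) (hM : 0 < ∑ k, μ k)
    (hN : 0 < ∑ k, ν k) (i : ι) (j : κ) :
    √(μ i) * √(ν j) = √((∑ k, μ k) * ∑ k, ν k) ↔ μ i = ∑ k, μ k ∧ ν j = ∑ k, ν k := by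
  rw [← Real.sqrt_mul (hμ i), Real.sqrt_inj (mul_nonneg (hμ i) (hν j)) (by positivity)]
  obtain hi | hi := (show 0 ≤ μ i from hμ i).eq_or_lt
  · simp [← hi, hM.ne, hM.ne', hN.ne']
  exact mul_eq_mul_iff_eq_and_eq_of_pos (single_le_sum (fun k _ ↦ hμ k) (mem_univ i))
    (single_le_sum (fun k _ ↦ hν k) (mem_univ j)) hi hN

lemma mul_mul_eq_sqrt_mul_sqrt_mul {x y : ℝ} (hx : 0 ≤ x) (hy : 0 ≤ y) (t : ℝ) :
    x * y * t = √x * √y * (√x * √y * t) := by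
  linear_combination (-(√y * √y) * t) * Real.mul_self_sqrt hx + (-x * t) * Real.mul_self_sqrt hy

variable {t : ι → κ → ℝ}

lemma mul_mul_le_sqrt_mul_sqrt_mul_sqrt_sum_mul_sum (hμ : 0 ≤ μ) (hν : 0 ≤ ν) (ht : 0 ≤ t)
    (i : ι) (j : κ) :
    μ i * ν j * t i j ≤ √(μ i) * √(ν j) * t i j * √((∑ k, μ k) * ∑ k, ν k) := by
  rw [mul_mul_eq_sqrt_mul_sqrt_mul (hμ i) (hν j), mul_comm (√(μ i) * √(ν j))]
  exact mul_le_mul_of_nonneg_left (sqrt_mul_sqrt_le_sqrt_sum_mul_sum hμ hν i j)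
    (mul_nonneg (by positivity) (ht i j))

theorem sum_mul_mul_div_le_sum_sqrt_mul_sqrt (hμ : 0 ≤ μ) (hν : 0 ≤ ν) (ht : 0 ≤ t) :
    (∑ i, ∑ j, μ i * ν j * t i j) / √((∑ k, μ k) * ∑ k, ν k)
      ≤ ∑ i, ∑ j, √(μ i) * √(ν j) * t i j := by
  refine div_le_of_le_mul₀ (Real.sqrt_nonneg _)
    (sum_nonneg fun i _ ↦ sum_nonneg fun j _ ↦ mul_nonneg (by positivity) (ht i j)) ?_
  set C := √((∑ k, μ k) * ∑ k, ν k)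
  simp only [sum_mul]
  exact sum_le_sum fun i _ ↦ sum_le_sum fun j _ ↦
    mul_mul_le_sqrt_mul_sqrt_mul_sqrt_sum_mul_sum hμ hν ht i j

theorem sum_sqrt_mul_sqrt_eq_div_iff (hμ : 0 ≤ μ) (hν : 0 ≤ ν) (ht : 0 ≤ t)
    (hM : 0 < ∑ k, μ k) (hN : 0 < ∑ k, ν k) :
    ∑ i, ∑ j, √(μ i) * √(ν j) * t i j
        = (∑ i, ∑ j, μ i * ν j * t i j) / √((∑ k, μ k) * ∑ k, ν k)
      ↔ ∑ i, ∑ j, μ i * ν j * t i j = 0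
        ∨ Fintype.card {k // μ k ≠ 0} = 1 ∧ Fintype.card {k // ν k ≠ 0} = 1 := by
  have hterm (i : ι) (j : κ) :
      μ i * ν j * t i j = √(μ i) * √(ν j) * t i j * √((∑ k, μ k) * ∑ k, ν k)
        ↔ √(μ i) * √(ν j) * t i j = 0 ∨ μ i = ∑ k, μ k ∧ ν j = ∑ k, ν k := by
    rw [mul_mul_eq_sqrt_mul_sqrt_mul (hμ i) (hν j), mul_comm (√(μ i) * √(ν j)),
      mul_eq_mul_left_iff, sqrt_mul_sqrt_eq_sqrt_sum_mul_sum_iff hμ hν hM hN, or_comm]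
  have hzero (i : ι) (j : κ) : μ i * ν j * t i j = 0 ↔ √(μ i) * √(ν j) * t i j = 0 := by
    simp [Real.sqrt_eq_zero (hμ i), Real.sqrt_eq_zero (hν j)]
  rw [eq_div_iff (Real.sqrt_pos.2 (mul_pos hM hN)).ne', eq_comm]
  set C := √((∑ k, μ k) * ∑ k, ν k)
  simp only [sum_mul, ← Fintype.sum_prod_type']
  rw [sum_eq_sum_iff_of_le fun p _ ↦
      mul_mul_le_sqrt_mul_sqrt_mul_sqrt_sum_mul_sum hμ hν ht p.1 p.2,
    sum_eq_zero_iff_of_nonneg fun p _ ↦ mul_nonneg (mul_nonneg (hμ p.1) (hν p.2)) (ht p.1 p.2)]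
  simp only [mem_univ, forall_const, Prod.forall, hterm, hzero]
  constructor
  · intro h
    by_cases h0 : ∀ i j, √(μ i) * √(ν j) * t i j = 0
    · exact .inl h0
    push Not at h0
    obtain ⟨i, j, hij⟩ := h0
    obtain ⟨hi, hj⟩ := (h i j).resolve_left hij
    exact .inr ⟨(eq_sum_iff_card_ne_zero_eq_one hμ fun h ↦ hij (by simp [h])).1 hi,
      (eq_sum_iff_card_ne_zero_eq_one hν fun h ↦ hij (by simp [h])).1 hj⟩
  · rintro (h0 | ⟨hμ1, hν1⟩) i j
    · exact .inl (h0 i j)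
    by_cases hij : √(μ i) * √(ν j) * t i j = 0
    · exact .inl hij
    exact .inr ⟨(eq_sum_iff_card_ne_zero_eq_one hμ fun h ↦ hij (by simp [h])).2 hμ1,
      (eq_sum_iff_card_ne_zero_eq_one hν fun h ↦ hij (by simp [h])).2 hν1⟩

end WeightedSums

namespace Matrix

variable {n 𝕜 : Type*} [Fintype n] [DecidableEq n] [RCLike 𝕜]

lemma trace_mul_conj_diagonal (W : Matrix n n 𝕜) (f g : n → ℝ) :
    (diagonal (RCLike.ofReal ∘ f) * W * diagonal (RCLike.ofReal ∘ g) * star W).trace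
      = ((∑ i, ∑ j, f i * g j * ‖W i j‖ ^ 2 : ℝ) : 𝕜) := by
  have hDWD : diagonal (RCLike.ofReal ∘ f) * W * diagonal (RCLike.ofReal ∘ g)
      = of fun i j ↦ (f i : 𝕜) * W i j * g j := by
    ext i j
    simp [mul_diagonal, diagonal_mul]
  simp only [hDWD, trace, diag, mul_apply, of_apply, star_apply, RCLike.star_def]
  push_cast
  refine sum_congr rfl fun i _ ↦ sum_congr rfl fun j _ ↦ ?_
  rw [← RCLike.mul_conj]
  ring

lemma trace_conj_diagonal_mul_conj_diagonal (U V : Matrix n n 𝕜) (f g : n → ℝ) :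
    (U * diagonal (RCLike.ofReal ∘ f) * star U * (V * diagonal (RCLike.ofReal ∘ g) * star V)).trace
      = ((∑ i, ∑ j, f i * g j * ‖(star U * V) i j‖ ^ 2 : ℝ) : 𝕜) := by
  rw [← trace_mul_conj_diagonal, star_mul, star_star]
  simp only [Matrix.mul_assoc]
  rw [trace_mul_comm U]
  simp only [Matrix.mul_assoc]

variable {A : Matrix n n 𝕜}

lemma IsHermitian.re_trace_eq_sum_eigenvalues (hA : A.IsHermitian) :
    RCLike.re A.trace = ∑ i, hA.eigenvalues i := by
  simp [hA.trace_eq_sum_eigenvalues]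

lemma PosSemidef.sum_eigenvalues_pos (hA : A.PosSemidef) (hA0 : A ≠ 0) :
    0 < ∑ i, hA.1.eigenvalues i := by
  refine (sum_nonneg fun i _ ↦ hA.eigenvalues_nonneg i).lt_of_ne fun h ↦ hA0 ?_
  rw [← hA.trace_eq_zero_iff, hA.1.trace_eq_sum_eigenvalues, ← RCLike.ofReal_sum, ← h,
    RCLike.ofReal_zero]

end Matrix

/-- For nonzero positive semidefinite `d×d` complex matrices `A` and `B`,
`tr(√A √B) ≥ tr(AB) / √(tr A · tr B)`, with equality iff `tr(AB) = 0` or both `A` and `B`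
have rank one. -/
theorem sqrt_trace_inequality
    (d : ℕ) (A B : Matrix (Fin d) (Fin d) ℂ)
    (hA : A.PosSemidef) (hB : B.PosSemidef)
    (hA0 : A ≠ 0) (hB0 : B ≠ 0) :
    (hA.sqrt * hB.sqrt).trace.re ≥ (A * B).trace.re / Real.sqrt (A.trace.re * B.trace.re)
    ∧ ((hA.sqrt * hB.sqrt).trace.re = (A * B).trace.re / Real.sqrt (A.trace.re * B.trace.re)
        ↔ (A * B).trace = 0 ∨ (A.rank = 1 ∧ B.rank = 1)) := by
  set μ := hA.1.eigenvalues
  set ν := hB.1.eigenvalues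
  set W := star (hA.1.eigenvectorUnitary : Matrix (Fin d) (Fin d) ℂ) * hB.1.eigenvectorUnitary
  have hAB : (A * B).trace = ((∑ i, ∑ j, μ i * ν j * ‖W i j‖ ^ 2 : ℝ) : ℂ) := by
    rw [hA.1.spectral_theorem, hB.1.spectral_theorem, Unitary.conjStarAlgAut_apply,
      Unitary.conjStarAlgAut_apply]
    exact trace_conj_diagonal_mul_conj_diagonal _ _ μ ν
  have hsqrt : (hA.sqrt * hB.sqrt).trace
      = ((∑ i, ∑ j, √(μ i) * √(ν j) * ‖W i j‖ ^ 2 : ℝ) : ℂ) :=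
    trace_conj_diagonal_mul_conj_diagonal _ _ (Real.sqrt ∘ μ) (Real.sqrt ∘ ν)
  rw [hsqrt, hAB, Complex.ofReal_re, Complex.ofReal_re, Complex.ofReal_eq_zero,
    ← RCLike.re_to_complex, ← RCLike.re_to_complex, hA.1.re_trace_eq_sum_eigenvalues,
    hB.1.re_trace_eq_sum_eigenvalues, hA.1.rank_eq_card_non_zero_eigs,
    hB.1.rank_eq_card_non_zero_eigs]
  have ht : 0 ≤ fun i j ↦ ‖W i j‖ ^ 2 := fun _ _ ↦ by positivity
  exact ⟨sum_mul_mul_div_le_sum_sqrt_mul_sqrt hA.eigenvalues_nonneg hB.eigenvalues_nonneg ht,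
    sum_sqrt_mul_sqrt_eq_div_iff hA.eigenvalues_nonneg hB.eigenvalues_nonneg ht
      (hA.sum_eigenvalues_pos hA0) (hB.sum_eigenvalues_pos hB0)⟩
end

section
/- Let d ≥ 2 and let {Π_i}_{i=1}^{d²} be rank-one orthogonal projections on ℂ^d with tr(Π_i Π_j) = 1/(d+1) for all i ≠ j and Σ_{i=1}^{d²} Π_i = d·I (a SIC). Define the reflected SIC effects E_i = (I − Π_i)/(d(d−1)). Then {E_i}_{i=1}^{d²} is a POVM, its measurement strength is R = d − (1/d) Σ_i (tr √E_i)² = 1, its orthogonality is O = Σ_{i,j} (tr(√E_i √E_j))² − 2d + d² = (2d⁴ − 4d³ − d² + 4d)/(d² − 1), and its disturbance is D = Σ_{l,m} (tr(√E_l √E_m))² − 2 Σ_l (tr √E_l)² + d² = d²/(d² − 1). -/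
open Matrix BigOperators
open scoped ComplexOrder

/-! Each reflected effect is `c • (1 - Πᵢ)` with `c = 1/(d(d-1))` and `1 - Πᵢ` an orthogonal
projection, so its square root is `√c • (1 - Πᵢ)`. All the traces entering `R`, `O` and `D` are
then affine in `tr(Πᵢ Πⱼ)`, which takes only the two values `1` and `1/(d+1)`, and the three
quantities reduce to rational identities in `d`. -/

open scoped MatrixOrder

namespace Matrix

variable {n 𝕜 : Type*} [Fintype n] [DecidableEq n] [RCLike 𝕜]

lemma PosSemidef.sqrt_eq_cfcSqrt {A : Matrix n n 𝕜} (hA : A.PosSemidef) :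
    hA.sqrt = CFC.sqrt A := by
  rw [CFC.sqrt_eq_real_sqrt A hA.nonneg, cfcₙ_eq_cfc, hA.1.cfc_eq]
  rfl

lemma PosSemidef.sqrt_eq_of_mul_self_eq {A B : Matrix n n 𝕜} (hA : A.PosSemidef)
    (hB : B.PosSemidef) (h : B * B = A) : hA.sqrt = B := by
  rw [hA.sqrt_eq_cfcSqrt, CFC.sqrt_unique h hB.nonneg]

lemma PosSemidef.sqrt_eq_of_eq_smul_isStarProjection {A Q : Matrix n n 𝕜} {c : ℝ}
    (hA : A.PosSemidef) (hQ : IsStarProjection Q) (hc : 0 ≤ c) (hAQ : A = c • Q) :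
    hA.sqrt = √c • Q := by
  refine hA.sqrt_eq_of_mul_self_eq (smul_nonneg (Real.sqrt_nonneg c) hQ.nonneg).posSemidef ?_
  rw [smul_mul_smul, Real.mul_self_sqrt hc, hQ.isIdempotentElem.eq, hAQ]

end Matrix

lemma Matrix.sum_smul_one_sub {ι n R : Type*} [Fintype ι] [DecidableEq n] [CommRing R]
    {P : ι → Matrix n n R} {m : R} (hP : ∑ i, P i = m • 1) (c : R) :
    ∑ i, c • (1 - P i) = (c * (Fintype.card ι - m)) • 1 := by
  rw [← Finset.smul_sum, Finset.sum_sub_distrib, hP, Finset.sum_const, Finset.card_univ,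
    ← Nat.cast_smul_eq_nsmul R, ← sub_smul, smul_smul]

lemma Matrix.trace_one_sub_mul_one_sub {n R : Type*} [Fintype n] [DecidableEq n] [Ring R]
    (P Q : Matrix n n R) :
    trace ((1 - P) * (1 - Q)) = Fintype.card n - trace P - trace Q + trace (P * Q) := by
  simp only [sub_mul, mul_sub, one_mul, mul_one, trace_sub, trace_one]
  abel

lemma Matrix.re_trace_smul_one_sub {n : Type*} [Fintype n] [DecidableEq n] {P : Matrix n n ℂ}
    (hP : trace P = 1) (a : ℝ) :
    (trace (a • (1 - P))).re = a * (Fintype.card n - 1) := by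
  simp [trace_sub, hP]

lemma Matrix.re_trace_smul_one_sub_mul_smul_one_sub {n : Type*} [Fintype n] [DecidableEq n]
    {P Q : Matrix n n ℂ} (hP : trace P = 1) (hQ : trace Q = 1) (a b : ℝ) :
    (trace ((a • (1 - P)) * (b • (1 - Q)))).re
      = a * b * (Fintype.card n - 2 + (trace (P * Q)).re) := by
  rw [smul_mul_smul, trace_smul, trace_one_sub_mul_one_sub, hP, hQ]
  simp only [Complex.real_smul, Complex.re_ofReal_mul, Complex.add_re, Complex.sub_re,
    Complex.natCast_re, Complex.one_re]
  ring

lemma Matrix.re_trace_mul_eq_ite {ι n : Type*} [DecidableEq ι] [Fintype n]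
    {P : ι → Matrix n n ℂ} {t : ℝ} (hP : ∀ i, P i * P i = P i ∧ trace (P i) = 1)
    (hPP : ∀ i j, i ≠ j → trace (P i * P j) = t) (i j : ι) :
    (trace (P i * P j)).re = if i = j then 1 else t := by
  split_ifs with hij
  · rw [hij, (hP j).1, (hP j).2, Complex.one_re]
  · rw [hPP i j hij, Complex.ofReal_re]

lemma Fintype.sum_sum_ite_eq {ι R : Type*} [Fintype ι] [DecidableEq ι] [CommRing R] (a b : R) :
    ∑ i : ι, ∑ j : ι, (if i = j then a else b)
      = Fintype.card ι * a + Fintype.card ι * (Fintype.card ι - 1) * b := by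
  have h : ∀ i : ι, ∑ j : ι, (if i = j then a else b) = a + (Fintype.card ι - 1) * b := by
    intro i
    rw [← Finset.add_sum_erase _ _ (Finset.mem_univ i), if_pos rfl,
      Finset.sum_congr rfl fun j hj => if_neg (Finset.ne_of_mem_erase hj).symm,
      Finset.sum_const, Finset.card_erase_of_mem (Finset.mem_univ i), Finset.card_univ,
      nsmul_eq_mul, Nat.cast_pred (Fintype.card_pos_iff.mpr ⟨i⟩)]
  simp only [h, Finset.sum_const, Finset.card_univ, nsmul_eq_mul]
  ring

/-- For `d ≥ 2` and a SIC `{Π_i}_{i=1}^{d²}` (rank-one orthogonal projections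
with `tr(Π_i Π_j) = 1/(d+1)` for `i ≠ j` and `Σ_i Π_i = d·I`), the reflected SIC effects
`E_i = (I − Π_i)/(d(d−1))` form a POVM with measurement strength `R = 1`, orthogonality
`O = (2d⁴ − 4d³ − d² + 4d)/(d² − 1)`, and disturbance `D = d²/(d² − 1)`. -/
theorem reflected_sic_properties
    (d : ℕ) (hd : 2 ≤ d)
    (P : Fin (d ^ 2) → Matrix (Fin d) (Fin d) ℂ)
    (hproj : ∀ i, (P i).IsHermitian ∧ P i * P i = P i ∧ (P i).trace = 1)
    (hangle : ∀ i j, i ≠ j → (P i * P j).trace = (((((d : ℝ) + 1)⁻¹ : ℝ)) : ℂ))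
    (hsumP : ∑ i, P i = (d : ℂ) • (1 : Matrix (Fin d) (Fin d) ℂ))
    (E : Fin (d ^ 2) → Matrix (Fin d) (Fin d) ℂ)
    (hEdef : ∀ i, E i = ((d : ℂ) * ((d : ℂ) - 1))⁻¹ • ((1 : Matrix (Fin d) (Fin d) ℂ) - P i)) :
    (∀ i, (E i).PosSemidef) ∧ (∑ i, E i = 1) ∧
    ∀ hE : ∀ i, (E i).PosSemidef,
      ((d : ℝ) - (1 / (d : ℝ)) * ∑ i, (((hE i).sqrt).trace.re) ^ 2 = 1)
      ∧ (∑ i, ∑ j, (((hE i).sqrt * (hE j).sqrt).trace.re) ^ 2 - 2 * (d : ℝ) + (d : ℝ) ^ 2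
          = (2 * (d : ℝ) ^ 4 - 4 * (d : ℝ) ^ 3 - (d : ℝ) ^ 2 + 4 * (d : ℝ)) / ((d : ℝ) ^ 2 - 1))
      ∧ (∑ l, ∑ m, (((hE l).sqrt * (hE m).sqrt).trace.re) ^ 2
            - 2 * ∑ l, (((hE l).sqrt).trace.re) ^ 2 + (d : ℝ) ^ 2
          = (d : ℝ) ^ 2 / ((d : ℝ) ^ 2 - 1)) := by
  have hd1 : (1 : ℝ) < d := by exact_mod_cast hd
  have hd0 : (d : ℝ) ≠ 0 := by positivity
  have hd_sub_one : (d : ℝ) - 1 ≠ 0 := by linarith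
  have hd_sq_sub_one : (d : ℝ) ^ 2 - 1 ≠ 0 := by nlinarith
  set c : ℝ := ((d : ℝ) * (d - 1))⁻¹ with hc_def
  have hc : 0 ≤ c := inv_nonneg.mpr (mul_nonneg (Nat.cast_nonneg d) (by linarith))
  have hEc : ∀ i, E i = c • (1 - P i) := fun i => by
    rw [hEdef, ← Complex.coe_smul, hc_def]
    push_cast
    rfl
  have hQ : ∀ i, IsStarProjection (1 - P i) := fun i =>
    IsStarProjection.one_sub ⟨(hproj i).2.1, (hproj i).1⟩
  have hEpsd : ∀ i, (E i).PosSemidef := fun i =>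
    hEc i ▸ (smul_nonneg hc (hQ i).nonneg).posSemidef
  refine ⟨hEpsd, ?_, fun hE => ?_⟩
  · have hdC : (d : ℂ) * ((d : ℂ) - 1) ≠ 0 := by exact_mod_cast mul_ne_zero hd0 hd_sub_one
    rw [Finset.sum_congr rfl fun i _ => hEdef i, sum_smul_one_sub hsumP, Fintype.card_fin,
      Nat.cast_pow]
    convert one_smul ℂ (1 : Matrix (Fin d) (Fin d) ℂ)
    rw [inv_mul_eq_one₀ hdC]
    ring
  have hsqrt : ∀ i, (hE i).sqrt = √c • (1 - P i) := fun i =>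
    (hE i).sqrt_eq_of_eq_smul_isStarProjection (hQ i) hc (hEc i)
  have htr : ∀ i, ((hE i).sqrt).trace.re ^ 2 = (d - 1) / d := fun i => by
    rw [hsqrt, re_trace_smul_one_sub (hproj i).2.2, Fintype.card_fin, mul_pow, Real.sq_sqrt hc,
      hc_def]
    field_simp
  have htr2 : ∀ i j, ((hE i).sqrt * (hE j).sqrt).trace.re
      = if i = j then 1 / (d : ℝ) else ((d : ℝ) ^ 2 - d - 1) / (d * (d ^ 2 - 1)) := fun i j => by
    rw [hsqrt, hsqrt, re_trace_smul_one_sub_mul_smul_one_sub (hproj i).2.2 (hproj j).2.2,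
      re_trace_mul_eq_ite (fun k => (hproj k).2) hangle, Real.mul_self_sqrt hc,
      Fintype.card_fin, hc_def]
    split_ifs <;> (field_simp; ring)
  simp only [htr, htr2, apply_ite (· ^ 2), Fintype.sum_sum_ite_eq, Finset.sum_const,
    Finset.card_univ, Fintype.card_fin, nsmul_eq_mul, Nat.cast_pow]
  refine ⟨?_, ?_, ?_⟩ <;> (field_simp; ring)
end
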